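/- arXiv:1808.10749 — 5 statements merged into one kernel-verified Lean document; each statement's English description precedes it below -/
import Mathlib

section
/- Let X and Y be compact Hausdorff spaces and f : X → Y a continuous map. Then the map I(f) : I(X) → I(Y), I(f)(μ)(ψ) = μ(ψ ∘ f), maps I_f(X) into I_f(Y); explicitly, if μ = ⊕_{i=1}^n λ_i ⊙ δ_{x_i} ∈ I_f(X) then I(f)(μ) = ⊕_{i=1}^n λ_i ⊙ δ_{f(x_i)} belongs to I_f(Y). -/
open Real Set Topology

/-- The Dirac measure `δ_x` on `X`, as a functional on `C(X, ℝ)`: `δ_x(φ) = φ(x)`. -/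
def dirac (X : Type*) [TopologicalSpace X] (x : X) : C(X, ℝ) → ℝ := fun φ => φ x

/-- The max-plus combination `⊕_{i=1}^n λ_i ⊙ δ_{x_i}`, i.e. the functional
`φ ↦ max_{1 ≤ i ≤ n} (λ_i + φ(x_i))`. -/
noncomputable def maxPlus {X : Type*} [TopologicalSpace X] {n : ℕ}
    (lam : Fin n → ℝ) (x : Fin n → X) : C(X, ℝ) → ℝ :=
  fun φ => ⨆ i, (lam i + φ (x i))

/-- `μ : C(X, ℝ) → ℝ` is an idempotent probability measure:
(1) `μ(c_λ) = λ` for constant functions; (2) `μ(λ + φ) = λ + μ(φ)`;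
(3) `μ(max(φ, ψ)) = max(μ(φ), μ(ψ))`. -/
def IsIPM {X : Type*} [TopologicalSpace X] (μ : C(X, ℝ) → ℝ) : Prop :=
  (∀ c : ℝ, μ (ContinuousMap.const X c) = c) ∧
  (∀ (c : ℝ) (φ : C(X, ℝ)), μ (ContinuousMap.const X c + φ) = c + μ φ) ∧
  (∀ φ ψ : C(X, ℝ), μ (φ ⊔ ψ) = max (μ φ) (μ ψ))

/-- Membership in `I_ω(X)`: idempotent probability measures with finite support, i.e.
`μ = ⊕_{i=1}^n λ_i ⊙ δ_{x_i}` with `x_i` pairwise distinct, `λ_i ≤ 0` and `max_i λ_i = 0`. -/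
def IsFS {X : Type*} [TopologicalSpace X] (μ : C(X, ℝ) → ℝ) : Prop :=
  ∃ n : ℕ, 0 < n ∧ ∃ (x : Fin n → X) (lam : Fin n → ℝ),
    Function.Injective x ∧ (∀ i, lam i ≤ 0) ∧ (∃ i, lam i = 0) ∧ μ = maxPlus lam x

/-- Membership in `I_f(X)`: `μ = ⊕_{i=1}^n λ_i ⊙ δ_{x_i}` with `x_i` pairwise distinct,
a unique index `i₀` with `λ_{i₀} = 0`, and `λ_i ≤ -ln(n+1)` for every `i ≠ i₀`. -/
def IsIf {X : Type*} [TopologicalSpace X] (μ : C(X, ℝ) → ℝ) : Prop :=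
  ∃ n : ℕ, 0 < n ∧ ∃ (x : Fin n → X) (lam : Fin n → ℝ) (i0 : Fin n),
    Function.Injective x ∧ lam i0 = 0 ∧
    (∀ i, i ≠ i0 → lam i ≤ -Real.log (n + 1)) ∧ μ = maxPlus lam x

/-- The pushforward `I(f)(μ)(ψ) = μ(ψ ∘ f)`. -/
def push {X Y : Type*} [TopologicalSpace X] [TopologicalSpace Y]
    (f : C(X, Y)) (μ : C(X, ℝ) → ℝ) : C(Y, ℝ) → ℝ :=
  fun ψ => μ (ψ.comp f)

lemma ciSup_eq_sup' {ι : Type*} [Fintype ι] [Nonempty ι] (g : ι → ℝ) :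
    (⨆ i, g i) = Finset.univ.sup' Finset.univ_nonempty g := by
  apply le_antisymm
  · exact ciSup_le fun i => Finset.le_sup' g (Finset.mem_univ i)
  · exact Finset.sup'_le _ _ fun i _ => le_ciSup (Finite.bddAbove_range g) i

/-- `I(f)` maps `I_f(X)` into `I_f(Y)`; explicitly, if
`μ = ⊕_{i=1}^n λ_i ⊙ δ_{x_i}` then `I(f)(μ) = ⊕_{i=1}^n λ_i ⊙ δ_{f(x_i)}`. -/
theorem stmt3 {X Y : Type*} [TopologicalSpace X] [CompactSpace X] [T2Space X]
    [TopologicalSpace Y] [CompactSpace Y] [T2Space Y] (f : C(X, Y)) :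
    (∀ μ : C(X, ℝ) → ℝ, IsIf μ → IsIf (push f μ)) ∧
    (∀ {n : ℕ}, 0 < n → ∀ (x : Fin n → X) (lam : Fin n → ℝ),
      push f (maxPlus lam x) = maxPlus lam (fun i => f (x i))) := by
  have hpush : ∀ {n : ℕ} (x : Fin n → X) (lam : Fin n → ℝ),
      push f (maxPlus lam x) = maxPlus lam (fun i => f (x i)) := by
    intro n x lam
    funext ψ
    rfl
  refine ⟨?_, fun _ x lam => hpush x lam⟩
  rintro μ ⟨n, hn, x, lam, i0, hinj, hl0, hlam, rfl⟩
  rw [hpush]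
  classical
  haveI : Nonempty (Fin n) := ⟨i0⟩
  -- the image finset
  set s : Finset Y := Finset.image (fun i => f (x i)) Finset.univ with hs
  have hsn : s.Nonempty := ⟨f (x i0), Finset.mem_image.2 ⟨i0, Finset.mem_univ _, rfl⟩⟩
  set m : ℕ := s.card with hm
  have hmn : 0 < m := Finset.card_pos.2 hsn
  haveI : Nonempty (Fin m) := ⟨⟨0, hmn⟩⟩
  have hmle : m ≤ n := by
    calc m ≤ Finset.univ.card := Finset.card_image_le
    _ = n := by simp
  set e : Fin m ≃ {y // y ∈ s} := s.equivFin.symm with he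
  set y : Fin m → Y := fun j => (e j : Y) with hy
  have hyinj : Function.Injective y := fun a b hab => e.injective (Subtype.ext hab)
  -- each fiber is nonempty
  have hfiber : ∀ j : Fin m, (Finset.univ.filter (fun i => f (x i) = y j)).Nonempty := by
    intro j
    have : (y j) ∈ s := (e j).2
    obtain ⟨i, -, hi⟩ := Finset.mem_image.1 this
    exact ⟨i, Finset.mem_filter.2 ⟨Finset.mem_univ _, hi⟩⟩
  set lam' : Fin m → ℝ := fun j => (Finset.univ.filter (fun i => f (x i) = y j)).sup' (hfiber j) lam
    with hlam'
  set j0 : Fin m := e.symm ⟨f (x i0), Finset.mem_image.2 ⟨i0, Finset.mem_univ _, rfl⟩⟩ with hj0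
  have hyj0 : y j0 = f (x i0) := by simp [hy, hj0]
  refine ⟨m, hmn, y, lam', j0, hyinj, ?_, ?_, ?_⟩
  · -- lam' j0 = 0
    apply le_antisymm
    · apply Finset.sup'_le
      intro i _
      by_cases h : i = i0
      · subst h; exact le_of_eq hl0
      · have h1 : (0:ℝ) ≤ Real.log (n + 1) := Real.log_nonneg (by exact_mod_cast Nat.succ_le_succ (Nat.zero_le n))
        linarith [hlam i h]
    · rw [← hl0]
      exact Finset.le_sup' lam (Finset.mem_filter.2 ⟨Finset.mem_univ _, hyj0.symm⟩)
  · -- other lam' ≤ -log (m+1)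
    intro j hj
    apply Finset.sup'_le
    intro i hi
    have hi' : f (x i) = y j := (Finset.mem_filter.1 hi).2
    have hii0 : i ≠ i0 := by
      rintro rfl
      exact hj (hyinj (hi'.symm.trans hyj0.symm))
    refine (hlam i hii0).trans ?_
    have : Real.log (m + 1) ≤ Real.log (n + 1) :=
      Real.log_le_log (by positivity) (by exact_mod_cast Nat.succ_le_succ hmle)
    linarith
  · -- maxPlus equality
    funext ψ
    show (⨆ i, lam i + ψ (f (x i))) = ⨆ j, lam' j + ψ (y j)
    rw [ciSup_eq_sup', ciSup_eq_sup']
    apply le_antisymm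
    · apply Finset.sup'_le
      intro i _
      have hmem : f (x i) ∈ s := Finset.mem_image.2 ⟨i, Finset.mem_univ _, rfl⟩
      set j : Fin m := e.symm ⟨f (x i), hmem⟩ with hj
      have hyj : y j = f (x i) := by simp [hy, hj]
      have h1 : lam i ≤ lam' j :=
        Finset.le_sup' lam (Finset.mem_filter.2 ⟨Finset.mem_univ _, hyj.symm⟩)
      calc lam i + ψ (f (x i)) ≤ lam' j + ψ (y j) := by rw [hyj]; linarith
        _ ≤ _ := Finset.le_sup' (fun j => lam' j + ψ (y j)) (Finset.mem_univ j)
    · apply Finset.sup'_le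
      intro j _
      obtain ⟨i, hi, hmax⟩ := Finset.exists_mem_eq_sup' (hfiber j) lam
      have hi' : f (x i) = y j := (Finset.mem_filter.1 hi).2
      calc lam' j + ψ (y j) = lam i + ψ (f (x i)) := by rw [hlam', ← hmax, hi']
        _ ≤ _ := Finset.le_sup' (fun i => lam i + ψ (f (x i))) (Finset.mem_univ i)
end

section
/- Let X be a compact Hausdorff space. The map r : I_f(X) → δ(X) that sends each μ = ⊕_{i=1}^n λ_i ⊙ δ_{x_i} ∈ I_f(X) to δ_{x_{i_0}}, where i_0 is the unique index with λ_{i_0} = 0, is a well-defined continuous retraction of I_f(X) onto δ(X); in particular r(δ_x) = δ_x for every x ∈ X. -/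
open Real Set Topology

private lemma stmt4_key {X : Type*} [TopologicalSpace X] [CompactSpace X] {n : ℕ} (hn : 0 < n)
    (x : Fin n → X) (lam : Fin n → ℝ) (i0 : Fin n) (h0 : lam i0 = 0)
    (hle : ∀ i, i ≠ i0 → lam i ≤ -Real.log (n + 1)) (φ : C(X, ℝ)) (c : ℝ)
    (hc1 : 1 ≤ c) (hc2 : 2 * ‖φ‖ ≤ c * Real.log 2) :
    c * maxPlus lam x (c⁻¹ • φ) = φ (x i0) := by
  have hN : Nonempty (Fin n) := ⟨⟨0, hn⟩⟩
  have hc0 : (0:ℝ) < c := by linarith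
  have hcne : c ≠ 0 := ne_of_gt hc0
  unfold maxPlus
  rw [Real.mul_iSup_of_nonneg hc0.le]
  have heq : ∀ i, c * (lam i + (c⁻¹ • φ) (x i)) = c * lam i + φ (x i) := by
    intro i
    simp only [ContinuousMap.smul_apply, smul_eq_mul]
    field_simp
  simp only [heq]
  apply le_antisymm
  · apply ciSup_le
    intro i
    by_cases hi : i = i0
    · subst hi; rw [h0]; simp
    · have h1 : lam i ≤ -Real.log 2 := by
        have := hle i hi
        have hlog : Real.log 2 ≤ Real.log (n + 1) := by
          apply Real.log_le_log (by norm_num)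
          have : (1:ℝ) ≤ n := by exact_mod_cast hn
          linarith
        linarith
      have h2 : c * lam i ≤ c * (-Real.log 2) :=
        mul_le_mul_of_nonneg_left h1 hc0.le
      have h3 : φ (x i) ≤ ‖φ‖ := by
        have := φ.norm_coe_le_norm (x i); exact (abs_le.mp (by simpa using this)).2
      have h4 : -‖φ‖ ≤ φ (x i0) := by
        have := φ.norm_coe_le_norm (x i0); exact (abs_le.mp (by simpa using this)).1
      nlinarith
  · have h5 : c * lam i0 + φ (x i0) = φ (x i0) := by rw [h0]; ring
    rw [← h5]
    exact le_ciSup (f := fun i => c * lam i + φ (x i))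
      (Set.Finite.bddAbove (Set.finite_range _)) i0

/-- there is a (unique) map `r : I_f(X) → δ(X)` sending each
`μ = ⊕_{i=1}^n λ_i ⊙ δ_{x_i}` to `δ_{x_{i₀}}`, where `i₀` is the unique index with
`λ_{i₀} = 0`; it is well defined, continuous, takes values in `δ(X)`, and is a
retraction: `r(δ_x) = δ_x` for every `x ∈ X`. -/
theorem stmt4 {X : Type*} [TopologicalSpace X] [CompactSpace X] [T2Space X] :
    ∃ r : {μ : C(X, ℝ) → ℝ // IsIf μ} → C(X, ℝ) → ℝ,
      Continuous r ∧
      (∀ μ : {μ : C(X, ℝ) → ℝ // IsIf μ}, ∃ x : X, r μ = dirac X x) ∧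
      (∀ (n : ℕ), 0 < n → ∀ (x : Fin n → X) (lam : Fin n → ℝ) (i0 : Fin n),
        Function.Injective x → lam i0 = 0 →
        (∀ i, i ≠ i0 → lam i ≤ -Real.log (n + 1)) →
        ∀ hμ : IsIf (maxPlus lam x), r ⟨maxPlus lam x, hμ⟩ = dirac X (x i0)) ∧
      (∀ (x : X) (hx : IsIf (dirac X x)), r ⟨dirac X x, hx⟩ = dirac X x) := by
  classical
  set c : C(X, ℝ) → ℝ := fun φ => max 1 (2 * ‖φ‖ / Real.log 2) with hc
  have hc1 : ∀ φ, 1 ≤ c φ := fun φ => le_max_left _ _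
  have hc2 : ∀ φ : C(X, ℝ), 2 * ‖φ‖ ≤ c φ * Real.log 2 := by
    intro φ
    have hlog : (0:ℝ) < Real.log 2 := Real.log_pos (by norm_num)
    have : 2 * ‖φ‖ / Real.log 2 ≤ c φ := le_max_right _ _
    calc 2 * ‖φ‖ = (2 * ‖φ‖ / Real.log 2) * Real.log 2 := by field_simp
      _ ≤ c φ * Real.log 2 := mul_le_mul_of_nonneg_right this hlog.le
  refine ⟨fun μ φ => c φ * μ.1 ((c φ)⁻¹ • φ), ?_, ?_, ?_, ?_⟩
  · apply continuous_pi
    intro φ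
    exact continuous_const.mul ((continuous_apply ((c φ)⁻¹ • φ)).comp continuous_subtype_val)
  · rintro ⟨μ, n, hn, x, lam, i0, hinj, h0, hle, rfl⟩
    exact ⟨x i0, funext fun φ => stmt4_key hn x lam i0 h0 hle φ _ (hc1 φ) (hc2 φ)⟩
  · intro n hn x lam i0 hinj h0 hle hμ
    exact funext fun φ => stmt4_key hn x lam i0 h0 hle φ _ (hc1 φ) (hc2 φ)
  · intro x hx
    funext φ
    have hcpos : (0:ℝ) < c φ := lt_of_lt_of_le one_pos (hc1 φ)
    simp only [dirac, ContinuousMap.smul_apply, smul_eq_mul]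
    field_simp
end

section
/- Let X be a compact Hausdorff space and let r : I_f(X) → δ(X) be the map sending μ = ⊕_{i=1}^n λ_i ⊙ δ_{x_i} to δ_{x_{i_0}}, where i_0 is the unique index with λ_{i_0} = 0. Then for every x ∈ X the fiber r^{-1}(δ_x) is contractible: the map h : r^{-1}(δ_x) × [0,1] → r^{-1}(δ_x) defined by h(μ,t) = (ln(1−t) − max(ln t, ln(1−t))) ⊙ δ_x ⊕ (ln t − max(ln t, ln(1−t))) ⊙ μ is a continuous homotopy with h(·,1) = id and h(·,0) the constant map to δ_x. -/
open Real Set Topology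

/-- The homotopy `h(μ,t) = (ln(1−t) − max(ln t, ln(1−t))) ⊙ δ_x ⊕ (ln t − max(ln t, ln(1−t))) ⊙ μ`,
with the convention `ln 0 = −∞` (a term with coefficient `−∞` is omitted from the maximum),
so that `h(μ,0) = δ_x` and `h(μ,1) = μ`. -/
noncomputable def fiberH {X : Type*} [TopologicalSpace X] (x : X)
    (μ : C(X, ℝ) → ℝ) (t : ℝ) : C(X, ℝ) → ℝ :=
  if t = 0 then dirac X x
  else if t = 1 then μ
  else fun φ =>
    max (Real.log (1 - t) - max (Real.log t) (Real.log (1 - t)) + φ x)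
        (Real.log t - max (Real.log t) (Real.log (1 - t)) + μ φ)


noncomputable def bfun (t : ℝ) : ℝ := min 0 (Real.log t - Real.log (1 - t))

lemma bfun_continuousAt {t : ℝ} (h0 : 0 < t) (h1 : t ≤ 1) : ContinuousAt bfun t := by
  rcases eq_or_lt_of_le h1 with h1 | h1
  · subst h1
    have hmem : Ioo (1/2 : ℝ) (3/2) ∈ nhds (1:ℝ) := isOpen_Ioo.mem_nhds (by norm_num)
    have hev : bfun =ᶠ[nhds (1:ℝ)] fun _ => 0 := by
      filter_upwards [hmem] with s hs
      rcases eq_or_ne s 1 with rfl | hne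
      · simp [bfun]
      · have habs : |1 - s| < 1/2 := by
          rw [abs_lt]; constructor <;> [linarith [hs.2]; linarith [hs.1]]
        have habs0 : 0 < |1 - s| := abs_pos.mpr (by intro h; apply hne; linarith)
        have hlog : Real.log (1 - s) < Real.log s := by
          calc Real.log (1-s) = Real.log |1-s| := (Real.log_abs _).symm
          _ < Real.log (1/2) := Real.log_lt_log habs0 habs
          _ < Real.log s := Real.log_lt_log (by norm_num) hs.1
        simp only [bfun]
        exact min_eq_left (by linarith)
    exact continuousAt_const.congr hev.symm
  · have h1t : (1 : ℝ) - t ≠ 0 := by intro h; linarith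
    have hc : ContinuousAt (fun s : ℝ => Real.log (1 - s)) t :=
      (Real.continuousAt_log h1t).comp ((continuous_const.sub continuous_id).continuousAt)
    exact continuousAt_const.min ((Real.continuousAt_log h0.ne').sub hc)

/-- The max-plus combination lemma. -/
lemma combine {X : Type*} [TopologicalSpace X] {n : ℕ} (hn : 0 < n)
    (x' : Fin n → X) (lam : Fin n → ℝ) (i0 : Fin n) (h0 : lam i0 = 0)
    (a b : ℝ) (ha : a ≤ 0) (hb : b ≤ 0) (hab : max a b = 0) (y : X)
    (hpt : ∀ φ : C(X,ℝ), φ (x' i0) = φ y) (φ : C(X,ℝ)) :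
    max (a + φ y) (b + maxPlus lam x' φ) =
      maxPlus (fun i => if i = i0 then 0 else b + lam i) x' φ := by
  haveI : Nonempty (Fin n) := ⟨⟨0, hn⟩⟩
  set g : Fin n → ℝ := fun i => (if i = i0 then 0 else b + lam i) + φ (x' i) with hg
  have hgB : BddAbove (Set.range g) := Set.Finite.bddAbove (Set.finite_range g)
  have hfB : BddAbove (Set.range fun i => lam i + φ (x' i)) :=
    Set.Finite.bddAbove (Set.finite_range _)
  have hle : ∀ i, lam i + φ (x' i) ≤ ⨆ j, (lam j + φ (x' j)) := fun i => le_ciSup hfB i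
  show max (a + φ y) (b + ⨆ i, (lam i + φ (x' i))) = ⨆ i, g i
  apply le_antisymm
  · apply max_le
    · have hg0 : g i0 = φ y := by simp [hg, hpt φ]
      have : a + φ y ≤ g i0 := by rw [hg0]; linarith
      exact this.trans (le_ciSup hgB i0)
    · have h2 : ∀ i, lam i + φ (x' i) ≤ (⨆ j, g j) - b := by
        intro i
        have hgi : b + (lam i + φ (x' i)) ≤ g i := by
          by_cases hi : i = i0
          · subst hi; simp [hg, h0]; linarith
          · simp only [hg, if_neg hi]; linarith
        have := hgi.trans (le_ciSup hgB i)
        linarith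
      have := ciSup_le h2
      linarith
  · apply ciSup_le
    intro i
    by_cases hi : i = i0
    · subst hi
      have hg0 : g i = φ y := by simp [hg, hpt φ]
      rw [hg0]
      have hy : φ y ≤ ⨆ j, (lam j + φ (x' j)) := by
        have := hle i; rw [h0, hpt φ] at this; linarith
      have hab' : a = 0 ∨ b = 0 := by
        rcases le_total a b with h|h
        · right; rw [max_eq_right h] at hab; exact hab
        · left; rw [max_eq_left h] at hab; exact hab
      rcases hab' with h|h
      · exact le_trans (by rw [h]; linarith : φ y ≤ a + φ y) (le_max_left _ _)
      · have : φ y ≤ b + ⨆ j, (lam j + φ (x' j)) := by rw [h]; linarith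
        exact this.trans (le_max_right _ _)
    · have hgi : g i = b + (lam i + φ (x' i)) := by simp only [hg, if_neg hi]; ring
      rw [hgi]
      exact le_trans (by linarith [hle i]) (le_max_right _ _)

/-- every fiber `r⁻¹(δ_x)` of the retraction `r : I_f(X) → δ(X)` is
contractible: `h(μ,t) = (ln(1−t) − max(ln t, ln(1−t))) ⊙ δ_x ⊕ (ln t − max(ln t, ln(1−t))) ⊙ μ`
maps the fiber into itself, is (jointly) continuous, and satisfies `h(·,1) = id` and
`h(·,0) ≡ δ_x`. -/
theorem stmt7 {X : Type*} [TopologicalSpace X] [CompactSpace X] [T2Space X]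
    (r : {μ : C(X, ℝ) → ℝ // IsIf μ} → C(X, ℝ) → ℝ)
    (hr : ∀ (n : ℕ), 0 < n → ∀ (x : Fin n → X) (lam : Fin n → ℝ) (i0 : Fin n),
      Function.Injective x → lam i0 = 0 →
      (∀ i, i ≠ i0 → lam i ≤ -Real.log (n + 1)) →
      ∀ hμ : IsIf (maxPlus lam x), r ⟨maxPlus lam x, hμ⟩ = dirac X (x i0))
    (x : X) :
    (∀ μ : {μ : C(X, ℝ) → ℝ // IsIf μ}, r μ = dirac X x → ∀ t : unitInterval,
      ∃ h : IsIf (fiberH x μ.1 t), r ⟨fiberH x μ.1 t, h⟩ = dirac X x) ∧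
    Continuous (fun p : {μ : {μ : C(X, ℝ) → ℝ // IsIf μ} // r μ = dirac X x} × unitInterval =>
      fiberH x p.1.1.1 p.2) ∧
    (∀ μ : {μ : C(X, ℝ) → ℝ // IsIf μ}, r μ = dirac X x → fiberH x μ.1 1 = μ.1) ∧
    (∀ μ : {μ : C(X, ℝ) → ℝ // IsIf μ}, r μ = dirac X x → fiberH x μ.1 0 = dirac X x) := by
  classical
  -- representation lemma for fiber elements
  have rep : ∀ μ : {μ : C(X, ℝ) → ℝ // IsIf μ}, r μ = dirac X x →
      ∃ n : ℕ, 0 < n ∧ ∃ (x' : Fin n → X) (lam : Fin n → ℝ) (i0 : Fin n),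
        Function.Injective x' ∧ lam i0 = 0 ∧ (∀ i, i ≠ i0 → lam i ≤ -Real.log (n+1)) ∧
        μ.1 = maxPlus lam x' ∧ (∀ φ : C(X, ℝ), φ (x' i0) = φ x) := by
    intro μ hx
    obtain ⟨n, hn, x', lam, i0, hinj, h0, hrest, heq⟩ := μ.2
    have hiso : (⟨maxPlus lam x', heq ▸ μ.2⟩ : {μ : C(X, ℝ) → ℝ // IsIf μ}) = μ :=
      Subtype.ext heq.symm
    have hd : dirac X (x' i0) = dirac X x := by
      rw [← hr n hn x' lam i0 hinj h0 hrest (heq ▸ μ.2), hiso, hx]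
    exact ⟨n, hn, x', lam, i0, hinj, h0, hrest, heq, fun φ => congrFun hd φ⟩
  -- lower bound : φ x ≤ μ φ on the fiber
  have lb : ∀ μ : {μ : C(X, ℝ) → ℝ // IsIf μ}, r μ = dirac X x →
      ∀ φ : C(X, ℝ), φ x ≤ μ.1 φ := by
    intro μ hx φ
    obtain ⟨n, hn, x', lam, i0, hinj, h0, hrest, heq, hpt⟩ := rep μ hx
    have hfB : BddAbove (Set.range fun i => lam i + φ (x' i)) :=
      Set.Finite.bddAbove (Set.finite_range _)
    have h1 : lam i0 + φ (x' i0) ≤ ⨆ i, (lam i + φ (x' i)) := le_ciSup hfB i0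
    rw [h0, hpt φ] at h1
    rw [heq]
    show φ x ≤ ⨆ i, (lam i + φ (x' i))
    linarith
  -- formula for fiberH on (0,1]
  have form : ∀ μ : {μ : C(X, ℝ) → ℝ // IsIf μ}, r μ = dirac X x → ∀ t : ℝ, 0 < t → t ≤ 1 →
      ∀ φ : C(X, ℝ), fiberH x μ.1 t φ = max (φ x) (μ.1 φ + bfun t) := by
    intro μ hx t ht0 ht1 φ
    have hφ := lb μ hx φ
    rcases eq_or_lt_of_le ht1 with rfl | ht1
    · have hf : fiberH x μ.1 (1:ℝ) = μ.1 := by simp [fiberH]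
      have hbf : bfun 1 = 0 := by simp [bfun]
      rw [hf, hbf, add_zero, max_eq_right hφ]
    · simp only [fiberH, if_neg ht0.ne', if_neg ht1.ne]
      rcases le_total (Real.log t) (Real.log (1 - t)) with h | h
      · rw [max_eq_right h]
        have hb : bfun t = Real.log t - Real.log (1 - t) := min_eq_right (by simp [bfun]; linarith)
        rw [hb]
        congr 1 <;> ring
      · rw [max_eq_left h]
        have hb : bfun t = 0 := min_eq_left (by linarith)
        rw [hb, add_zero,
          max_eq_right (by linarith : Real.log (1-t) - Real.log t + φ x ≤ Real.log t - Real.log t + μ.1 φ),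
          max_eq_right hφ]
        ring
  -- membership of the homotopy in the fiber
  have mem : ∀ μ : {μ : C(X, ℝ) → ℝ // IsIf μ}, r μ = dirac X x → ∀ t : ℝ, 0 ≤ t → t ≤ 1 →
      ∃ h : IsIf (fiberH x μ.1 t), r ⟨fiberH x μ.1 t, h⟩ = dirac X x := by
    intro μ hx t ht0 ht1
    rcases eq_or_lt_of_le ht0 with h|ht0
    · -- t = 0
      subst h
      have hf : fiberH x μ.1 0 = dirac X x := by simp [fiberH]
      have hd : dirac X x = maxPlus (fun _ : Fin 1 => (0:ℝ)) (fun _ => x) := by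
        funext φ; simp [dirac, maxPlus, ciSup_unique]
      have hrest1 : ∀ i : Fin 1, i ≠ 0 → (fun _ : Fin 1 => (0:ℝ)) i ≤ -Real.log ((1:ℕ) + 1) :=
        fun i hi => absurd (Subsingleton.elim i 0) hi
      have hIf : IsIf (maxPlus (fun _ : Fin 1 => (0:ℝ)) (fun _ => x)) :=
        ⟨1, one_pos, fun _ => x, fun _ => 0, 0, Function.injective_of_subsingleton _, rfl,
          hrest1, rfl⟩
      have hfd : fiberH x μ.1 0 = maxPlus (fun _ : Fin 1 => (0:ℝ)) (fun _ => x) := hf.trans hd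
      refine ⟨hfd ▸ hIf, ?_⟩
      have hsub : (⟨fiberH x μ.1 0, hfd ▸ hIf⟩ : {μ : C(X, ℝ) → ℝ // IsIf μ}) =
          ⟨maxPlus (fun _ : Fin 1 => (0:ℝ)) (fun _ => x), hIf⟩ := Subtype.ext hfd
      rw [hsub, hr 1 one_pos (fun _ => x) (fun _ => 0) 0 (Function.injective_of_subsingleton _)
        rfl hrest1 hIf]
    rcases eq_or_lt_of_le ht1 with h|ht1
    · -- t = 1
      subst h
      have hf : fiberH x μ.1 1 = μ.1 := by simp [fiberH]
      have hIf1 : IsIf (fiberH x μ.1 1) := by rw [hf]; exact μ.2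
      refine ⟨hIf1, ?_⟩
      have hsub : (⟨fiberH x μ.1 1, hIf1⟩ : {μ : C(X, ℝ) → ℝ // IsIf μ}) = μ :=
        Subtype.ext hf
      rw [hsub, hx]
    · -- 0 < t < 1
      obtain ⟨n, hn, x', lam, i0, hinj, h0, hrest, heq, hpt⟩ := rep μ hx
      set M : ℝ := max (Real.log t) (Real.log (1-t)) with hM
      have ha0 : Real.log (1-t) - M ≤ 0 := by
        have := le_max_right (Real.log t) (Real.log (1-t)); rw [← hM] at this; linarith
      have hb0 : Real.log t - M ≤ 0 := by
        have := le_max_left (Real.log t) (Real.log (1-t)); rw [← hM] at this; linarith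
      have hab : max (Real.log (1-t) - M) (Real.log t - M) = 0 := by
        rw [max_sub_sub_right, max_comm, ← hM]; ring
      have heq2 : fiberH x μ.1 t =
          maxPlus (fun i => if i = i0 then 0 else (Real.log t - M) + lam i) x' := by
        funext φ
        simp only [fiberH, if_neg ht0.ne', if_neg ht1.ne]
        rw [heq, ← hM]
        exact combine hn x' lam i0 h0 _ _ ha0 hb0 hab x hpt φ
      have hrest' : ∀ i, i ≠ i0 →
          (fun i => if i = i0 then 0 else (Real.log t - M) + lam i) i ≤ -Real.log ((n:ℝ) + 1) := by
        intro i hi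
        simp only [if_neg hi]
        linarith [hrest i hi]
      have hIf : IsIf (maxPlus (fun i => if i = i0 then 0 else (Real.log t - M) + lam i) x') :=
        ⟨n, hn, x', _, i0, hinj, if_pos rfl, hrest', rfl⟩
      refine ⟨heq2 ▸ hIf, ?_⟩
      have hsub : (⟨fiberH x μ.1 t, heq2 ▸ hIf⟩ : {μ : C(X, ℝ) → ℝ // IsIf μ}) =
          ⟨maxPlus (fun i => if i = i0 then 0 else (Real.log t - M) + lam i) x', hIf⟩ :=
        Subtype.ext heq2
      rw [hsub, hr n hn x' _ i0 hinj (if_pos rfl) hrest' hIf]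
      funext φ
      exact hpt φ
  refine ⟨fun μ hx t => mem μ hx t t.2.1 t.2.2, ?_, ?_, ?_⟩
  · -- continuity
    rw [continuous_pi_iff]
    intro φ
    rw [continuous_iff_continuousAt]
    rintro ⟨μ0, t0⟩
    have hE : Continuous (fun μ : {μ : {μ : C(X, ℝ) → ℝ // IsIf μ} // r μ = dirac X x} => μ.1.1 φ) :=
      (continuous_apply φ).comp (continuous_subtype_val.comp continuous_subtype_val)
    by_cases h0 : (t0 : ℝ) = 0
    · -- locally constant near t = 0
      set δ : ℝ := min (1/2) (Real.exp (φ x - μ0.1.1 φ - 2 - Real.log 2)) with hδ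
      have hδ0 : 0 < δ := lt_min (by norm_num) (Real.exp_pos _)
      have hδh : δ ≤ 1/2 := min_le_left _ _
      have hδl : Real.log δ ≤ φ x - μ0.1.1 φ - 2 - Real.log 2 := by
        calc Real.log δ ≤ Real.log (Real.exp (φ x - μ0.1.1 φ - 2 - Real.log 2)) :=
              Real.log_le_log hδ0 (min_le_right _ _)
        _ = _ := Real.log_exp _
      have hU : {μ : {μ : {μ : C(X, ℝ) → ℝ // IsIf μ} // r μ = dirac X x} |
          μ.1.1 φ < μ0.1.1 φ + 1} ∈ nhds μ0 :=
        (isOpen_Iio.preimage hE).mem_nhds (by simp)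
      have hV : {t : unitInterval | (t : ℝ) < δ} ∈ nhds t0 :=
        (isOpen_Iio.preimage continuous_subtype_val).mem_nhds (by simp [h0, hδ0])
      have hev : ∀ᶠ p : {μ : {μ : C(X, ℝ) → ℝ // IsIf μ} // r μ = dirac X x} × unitInterval
          in nhds (μ0, t0), fiberH x p.1.1.1 p.2 φ = φ x := by
        filter_upwards [prod_mem_nhds hU hV] with p hp
        obtain ⟨hpU, hpV⟩ := hp
        by_cases ht : (p.2 : ℝ) = 0
        · rw [ht]; simp [fiberH, dirac]
        · have ht0' : 0 < (p.2 : ℝ) := lt_of_le_of_ne p.2.2.1 (Ne.symm ht)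
          rw [form p.1.1 p.1.2 p.2 ht0' p.2.2.2 φ]
          apply max_eq_left
          have h1 : bfun p.2 ≤ Real.log p.2 - Real.log (1 - p.2) := min_le_right _ _
          have h2 : Real.log p.2 < Real.log δ := Real.log_lt_log ht0' hpV
          have h3 : Real.log (1/2) ≤ Real.log (1 - (p.2:ℝ)) := by
            apply Real.log_le_log (by norm_num)
            have : (p.2 : ℝ) < δ := hpV
            linarith
          have h4 : Real.log ((1:ℝ)/2) = - Real.log 2 := by
            rw [Real.log_div one_ne_zero two_ne_zero, Real.log_one]; ring
          have h5 : p.1.1.1 φ < μ0.1.1 φ + 1 := hpU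
          linarith
      have hev' : (fun p : {μ : {μ : C(X, ℝ) → ℝ // IsIf μ} // r μ = dirac X x} × unitInterval =>
          fiberH x p.1.1.1 p.2 φ) =ᶠ[nhds (μ0, t0)] fun _ => φ x := hev
      exact continuousAt_const.congr hev'.symm
    · -- t0 ≠ 0 : use the formula
      have ht0' : 0 < (t0 : ℝ) := lt_of_le_of_ne t0.2.1 (Ne.symm h0)
      have hG : ContinuousAt (fun p : {μ : {μ : C(X, ℝ) → ℝ // IsIf μ} // r μ = dirac X x} ×
          unitInterval => max (φ x) (p.1.1.1 φ + bfun p.2)) (μ0, t0) := by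
        apply ContinuousAt.sup continuousAt_const
        apply ContinuousAt.add
        · exact (hE.comp continuous_fst).continuousAt
        · have hcoe : Continuous (fun p : {μ : {μ : C(X, ℝ) → ℝ // IsIf μ} // r μ = dirac X x} ×
              unitInterval => (p.2 : ℝ)) := continuous_subtype_val.comp continuous_snd
          exact ContinuousAt.comp (g := bfun) (x := (μ0, t0)) (bfun_continuousAt ht0' t0.2.2)
            hcoe.continuousAt
      apply hG.congr
      have hS : {p : {μ : {μ : C(X, ℝ) → ℝ // IsIf μ} // r μ = dirac X x} × unitInterval |
          (p.2 : ℝ) ≠ 0} ∈ nhds (μ0, t0) := by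
        have hop : IsOpen {p : {μ : {μ : C(X, ℝ) → ℝ // IsIf μ} // r μ = dirac X x} ×
            unitInterval | (p.2 : ℝ) ≠ 0} :=
          isOpen_compl_singleton.preimage (continuous_subtype_val.comp continuous_snd)
        exact hop.mem_nhds h0
      filter_upwards [hS] with p hp
      have htp : 0 < (p.2 : ℝ) := lt_of_le_of_ne p.2.2.1 (Ne.symm hp)
      exact (form p.1.1 p.1.2 p.2 htp p.2.2.2 φ).symm
  · intro μ hx
    show fiberH x μ.1 (1:ℝ) = μ.1
    simp [fiberH]
  · intro μ hx
    show fiberH x μ.1 (0:ℝ) = dirac X x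
    simp [fiberH]
end

section
/- Let X be a compact Hausdorff space. Then δ(X) is a strong deformation retract of I_f(X): there exists a continuous map h : I_f(X) × [0,1] → I_f(X) such that h(μ,0) = μ for every μ ∈ I_f(X), h(μ,1) = r(μ) ∈ δ(X) for every μ ∈ I_f(X), and h(δ_x, t) = δ_x for every x ∈ X and every t ∈ [0,1], where r : I_f(X) → δ(X) sends μ = ⊕_{i=1}^n λ_i ⊙ δ_{x_i} to δ_{x_{i_0}} with i_0 the unique index such that λ_{i_0} = 0. -/
open Real Set Topology

/-!
Let `μ = ⊕ λ_i ⊙ δ_{x_i}` be in `I_f(X)`. For `t < 1` the homotopy divides every weight by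
`1 - t`; the weights `λ_i ≤ -ln(n+1) ≤ -ln 2` of the points other than `x_{i₀}` then tend to
`-∞`, so `h(μ, t)` tends to `δ_{x_{i₀}}`. To make this continuous at `t = 1`, the homotopy is
written intrinsically as `h(μ, t)(φ) = μ(c • φ) / c` with the scale `c = max (1 - t) s(φ)`, where
the floor `s(φ) = ln 2 / (2‖φ‖ + 1)` is small enough that at every scale `c ≤ s(φ)` the rescaled
measure already takes the value `φ(x_{i₀})` at `φ`; so the floor changes nothing for `t < 1`.
Continuity in `μ` is uniform because every max-plus functional is `1`-Lipschitz for the sup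
norm.
-/

open unitInterval

section MaxPlus

variable {X : Type*} [TopologicalSpace X] {n : ℕ} (lam : Fin n → ℝ) (x : Fin n → X)

theorem le_maxPlus (φ : C(X, ℝ)) (i : Fin n) : lam i + φ (x i) ≤ maxPlus lam x φ :=
  le_ciSup (f := fun i => lam i + φ (x i)) (Set.finite_range _).bddAbove i

theorem maxPlus_le (hn : 0 < n) {φ : C(X, ℝ)} {M : ℝ} (h : ∀ i, lam i + φ (x i) ≤ M) :
    maxPlus lam x φ ≤ M :=
  haveI : Nonempty (Fin n) := ⟨⟨0, hn⟩⟩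
  ciSup_le h

theorem mul_maxPlus_div {a : ℝ} (ha : 0 < a) (φ : C(X, ℝ)) :
    a * maxPlus (fun i => lam i / a) x φ = maxPlus lam x (a • φ) := by
  simp only [maxPlus, Real.mul_iSup_of_nonneg ha.le, mul_add, mul_div_cancel₀ _ ha.ne',
    ContinuousMap.smul_apply, smul_eq_mul]

theorem maxPlus_eq_apply {i0 : Fin n} (h0 : lam i0 = 0) {φ : C(X, ℝ)}
    (h : ∀ i, i ≠ i0 → lam i + φ (x i) ≤ φ (x i0)) : maxPlus lam x φ = φ (x i0) := by
  refine le_antisymm (maxPlus_le lam x i0.pos fun i => ?_) ?_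
  · rcases eq_or_ne i i0 with rfl | hi
    · simp [h0]
    · exact h i hi
  · simpa [h0] using le_maxPlus lam x φ i0

theorem maxPlus_le_maxPlus_add (hn : 0 < n) {φ ψ : C(X, ℝ)} {c : ℝ} (h : ∀ y, φ y ≤ ψ y + c) :
    maxPlus lam x φ ≤ maxPlus lam x ψ + c :=
  maxPlus_le lam x hn fun i => by linarith [h (x i), le_maxPlus lam x ψ i]

variable [CompactSpace X]

theorem lipschitzWith_maxPlus (hn : 0 < n) : LipschitzWith 1 (maxPlus lam x) := by
  refine LipschitzWith.of_le_add fun φ ψ => maxPlus_le_maxPlus_add lam x hn fun y => ?_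
  linarith [(le_abs_self _).trans (ContinuousMap.dist_apply_le_dist (f := φ) (g := ψ) y)]

theorem maxPlus_eq_apply_of_le_neg_two_mul_norm {i0 : Fin n} (h0 : lam i0 = 0) {φ : C(X, ℝ)}
    (hb : ∀ i, i ≠ i0 → lam i ≤ -(2 * ‖φ‖)) : maxPlus lam x φ = φ (x i0) := by
  refine maxPlus_eq_apply lam x h0 fun i hi => ?_
  have hi' := abs_le.mp ((Real.norm_eq_abs _).symm.trans_le (φ.norm_coe_le_norm (x i)))
  have hi0 := abs_le.mp ((Real.norm_eq_abs _).symm.trans_le (φ.norm_coe_le_norm (x i0)))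
  linarith [hb i hi]

end MaxPlus

section Homotopy

variable {X : Type*} [TopologicalSpace X] [CompactSpace X]

noncomputable def diracScale (φ : C(X, ℝ)) : ℝ := log 2 / (2 * ‖φ‖ + 1)

theorem diracScale_pos (φ : C(X, ℝ)) : 0 < diracScale φ := by
  unfold diracScale; positivity

theorem diracScale_le_one (φ : C(X, ℝ)) : diracScale φ ≤ 1 :=
  (div_le_self (log_pos one_lt_two).le (by linarith [norm_nonneg φ])).trans
    (log_two_lt_d9.le.trans (by norm_num))

theorem maxPlus_div_eq_apply {n : ℕ} (hn : 0 < n) (x : Fin n → X) {lam : Fin n → ℝ} {i0 : Fin n}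
    (h0 : lam i0 = 0) (hb : ∀ i, i ≠ i0 → lam i ≤ -log (n + 1)) {φ : C(X, ℝ)} {a : ℝ}
    (ha : 0 < a) (haφ : a ≤ diracScale φ) :
    maxPlus (fun i => lam i / a) x φ = φ (x i0) := by
  refine maxPlus_eq_apply_of_le_neg_two_mul_norm _ x (by simp [h0]) fun i hi => ?_
  have hlog : log 2 ≤ log (n + 1) :=
    log_le_log two_pos (by linarith [(Nat.one_le_cast (α := ℝ)).mpr hn])
  have haφ' : a * (2 * ‖φ‖ + 1) ≤ log 2 :=
    (le_div_iff₀ (by positivity)).mp haφ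
  rw [div_le_iff₀ ha]
  linarith [hb i hi]

noncomputable def homotopyScale (φ : C(X, ℝ)) (t : I) : ℝ := max (1 - t) (diracScale φ)

theorem homotopyScale_pos (φ : C(X, ℝ)) (t : I) : 0 < homotopyScale φ t :=
  (diracScale_pos φ).trans_le (le_max_right _ _)

theorem continuous_homotopyScale (φ : C(X, ℝ)) : Continuous (homotopyScale φ) :=
  (continuous_const.sub continuous_subtype_val).max continuous_const

noncomputable def diracHomotopy (μ : C(X, ℝ) → ℝ) (t : I) (φ : C(X, ℝ)) : ℝ :=
  μ (homotopyScale φ t • φ) / homotopyScale φ t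

theorem diracHomotopy_zero (μ : C(X, ℝ) → ℝ) : diracHomotopy μ 0 = μ := by
  funext φ
  have h : homotopyScale φ 0 = 1 := by
    simpa [homotopyScale] using diracScale_le_one φ
  simp [diracHomotopy, h]

theorem diracHomotopy_dirac (x : X) (t : I) : diracHomotopy (dirac X x) t = dirac X x := by
  funext φ
  simp [diracHomotopy, dirac, (homotopyScale_pos φ t).ne']

theorem diracHomotopy_maxPlus_apply {n : ℕ} (lam : Fin n → ℝ) (x : Fin n → X) (t : I)
    (φ : C(X, ℝ)) :
    diracHomotopy (maxPlus lam x) t φ = maxPlus (fun i => lam i / homotopyScale φ t) x φ := by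
  rw [diracHomotopy, ← mul_maxPlus_div lam x (homotopyScale_pos φ t),
    mul_div_cancel_left₀ _ (homotopyScale_pos φ t).ne']

theorem diracHomotopy_maxPlus_one {n : ℕ} (hn : 0 < n) (x : Fin n → X) {lam : Fin n → ℝ}
    {i0 : Fin n} (h0 : lam i0 = 0) (hb : ∀ i, i ≠ i0 → lam i ≤ -log (n + 1)) :
    diracHomotopy (maxPlus lam x) 1 = dirac X (x i0) := by
  funext φ
  rw [diracHomotopy_maxPlus_apply]
  exact maxPlus_div_eq_apply hn x h0 hb (homotopyScale_pos φ 1)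
    (by simp [homotopyScale, (diracScale_pos φ).le])

theorem diracHomotopy_maxPlus_of_lt_one {n : ℕ} (hn : 0 < n) (x : Fin n → X) {lam : Fin n → ℝ}
    {i0 : Fin n} (h0 : lam i0 = 0) (hb : ∀ i, i ≠ i0 → lam i ≤ -log (n + 1)) {t : I}
    (ht : (t : ℝ) < 1) :
    diracHomotopy (maxPlus lam x) t = maxPlus (fun i => lam i / (1 - t)) x := by
  funext φ
  rw [diracHomotopy_maxPlus_apply]
  rcases le_total (diracScale φ) (1 - t) with hle | hle
  · rw [homotopyScale, max_eq_left hle]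
  · rw [maxPlus_div_eq_apply hn x h0 hb (homotopyScale_pos φ t) (max_le hle le_rfl),
      maxPlus_div_eq_apply hn x h0 hb (sub_pos.mpr ht) hle]

end Homotopy

section IsIf

variable {X : Type*} [TopologicalSpace X]

theorem isIf_dirac (x : X) : IsIf (dirac X x) :=
  ⟨1, one_pos, fun _ => x, fun _ => 0, 0, fun i j _ => Subsingleton.elim i j, rfl,
    fun i hi => absurd (Subsingleton.elim i 0) hi, by funext φ; simp [maxPlus, dirac]⟩

theorem isIf_maxPlus_div {n : ℕ} (hn : 0 < n) {x : Fin n → X} (hx : Function.Injective x)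
    {lam : Fin n → ℝ} {i0 : Fin n} (h0 : lam i0 = 0) (hb : ∀ i, i ≠ i0 → lam i ≤ -log (n + 1))
    {a : ℝ} (ha : 0 < a) (ha1 : a ≤ 1) : IsIf (maxPlus (fun i => lam i / a) x) := by
  refine ⟨n, hn, x, _, i0, hx, by simp [h0], fun i hi => ?_, rfl⟩
  have hlog : 0 ≤ log (n + 1) := log_nonneg (by linarith [(Nat.cast_nonneg (α := ℝ) n)])
  rw [div_le_iff₀ ha]
  nlinarith [hb i hi]

variable [CompactSpace X]

theorem IsIf.lipschitzWith {μ : C(X, ℝ) → ℝ} (hμ : IsIf μ) : LipschitzWith 1 μ := by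
  obtain ⟨n, hn, x, lam, -, -, -, -, rfl⟩ := hμ
  exact lipschitzWith_maxPlus lam x hn

theorem IsIf.diracHomotopy {μ : C(X, ℝ) → ℝ} (hμ : IsIf μ) (t : I) :
    IsIf (diracHomotopy μ t) := by
  obtain ⟨n, hn, x, lam, i0, hx, h0, hb, rfl⟩ := hμ
  rcases t.2.2.lt_or_eq with ht | ht
  · rw [diracHomotopy_maxPlus_of_lt_one hn x h0 hb ht]
    exact isIf_maxPlus_div hn hx h0 hb (sub_pos.mpr ht) (by linarith [t.2.1])
  · rw [show t = 1 from Subtype.ext ht, diracHomotopy_maxPlus_one hn x h0 hb]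
    exact isIf_dirac _

theorem continuous_diracHomotopy :
    Continuous fun p : {μ : C(X, ℝ) → ℝ // IsIf μ} × I => diracHomotopy p.1.1 p.2 := by
  have heval : Continuous fun q : {μ : C(X, ℝ) → ℝ // IsIf μ} × C(X, ℝ) => q.1.1 q.2 :=
    continuous_prod_of_continuous_lipschitzWith' _ 1 (fun μ => μ.2.lipschitzWith)
      fun φ => (continuous_apply φ).comp continuous_subtype_val
  refine continuous_pi fun φ => ?_
  have hscale : Continuous fun p : {μ : C(X, ℝ) → ℝ // IsIf μ} × I => homotopyScale φ p.2 :=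
    (continuous_homotopyScale φ).comp continuous_snd
  exact (heval.comp (continuous_fst.prodMk (hscale.smul continuous_const))).div hscale
    fun p => (homotopyScale_pos φ p.2).ne'

end IsIf

theorem stmt9_general {X : Type*} [TopologicalSpace X] [CompactSpace X] :
    ∃ h : {μ : C(X, ℝ) → ℝ // IsIf μ} → unitInterval → C(X, ℝ) → ℝ,
      Continuous (fun p : {μ : C(X, ℝ) → ℝ // IsIf μ} × unitInterval => h p.1 p.2) ∧
      (∀ μ t, IsIf (h μ t)) ∧
      (∀ μ, h μ 0 = μ.1) ∧
      (∀ (n : ℕ), 0 < n → ∀ (x : Fin n → X) (lam : Fin n → ℝ) (i0 : Fin n),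
        Function.Injective x → lam i0 = 0 →
        (∀ i, i ≠ i0 → lam i ≤ -Real.log (n + 1)) →
        ∀ hμ : IsIf (maxPlus lam x), h ⟨maxPlus lam x, hμ⟩ 1 = dirac X (x i0)) ∧
      (∀ (x : X) (hx : IsIf (dirac X x)) (t : unitInterval),
        h ⟨dirac X x, hx⟩ t = dirac X x) :=
  ⟨fun μ => diracHomotopy μ.1, continuous_diracHomotopy, fun μ => μ.2.diracHomotopy,
    fun μ => diracHomotopy_zero μ.1,
    fun _ hn x _ _ _ h0 hb _ => diracHomotopy_maxPlus_one hn x h0 hb,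
    fun x _ => diracHomotopy_dirac x⟩

/-- `δ(X)` is a strong deformation retract of `I_f(X)`: there is a continuous
`h : I_f(X) × [0,1] → I_f(X)` with `h(μ,0) = μ`, `h(μ,1) = r(μ) ∈ δ(X)` (where `r` sends
`μ = ⊕_{i=1}^n λ_i ⊙ δ_{x_i}` to `δ_{x_{i₀}}`, `i₀` the unique index with `λ_{i₀} = 0`),
and `h(δ_x, t) = δ_x` for all `x ∈ X`, `t ∈ [0,1]`. -/
theorem stmt9 {X : Type*} [TopologicalSpace X] [CompactSpace X] [T2Space X] :
    ∃ h : {μ : C(X, ℝ) → ℝ // IsIf μ} → unitInterval → C(X, ℝ) → ℝ,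
      Continuous (fun p : {μ : C(X, ℝ) → ℝ // IsIf μ} × unitInterval => h p.1 p.2) ∧
      (∀ μ t, IsIf (h μ t)) ∧
      (∀ μ, h μ 0 = μ.1) ∧
      (∀ (n : ℕ), 0 < n → ∀ (x : Fin n → X) (lam : Fin n → ℝ) (i0 : Fin n),
        Function.Injective x → lam i0 = 0 →
        (∀ i, i ≠ i0 → lam i ≤ -Real.log (n + 1)) →
        ∀ hμ : IsIf (maxPlus lam x), h ⟨maxPlus lam x, hμ⟩ 1 = dirac X (x i0)) ∧
      (∀ (x : X) (hx : IsIf (dirac X x)) (t : unitInterval),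
        h ⟨dirac X x, hx⟩ t = dirac X x) :=
  stmt9_general
end

section
/- Let X be a finite compact Hausdorff space (a finite discrete space). Then I_f(X) is a neighborhood retract of I(X): there exist an open subset U of I(X) containing I_f(X) and a continuous map ρ : U → I_f(X) with ρ(μ) = μ for every μ ∈ I_f(X). -/
/-!
On a finite discrete space an idempotent measure is `φ ↦ max_x (λ_x + φ x)` with
`λ_x ∈ [-∞, 0]`, and its weights `u_x = exp λ_x` are continuous in the measure, being uniform
limits of `exp μ (spike x K) = max u_x (exp (-K))`. A measure of `I_f(X)` has weight `1` at one
apex `x0` and weights at most `1/(n+1)` elsewhere, `n` being the number of positive weights; so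
its apex is a strict maximum of the weights, an open condition. Near measures with apex `x0` the
retraction keeps `u_{x0} = 1` and lowers the other weights by a common level `s ≥ 0` (cut off
at `0`), where `s` is continuous in the weights, vanishes on `I_f(X)`, and is large enough for
the surviving weights to obey the bound `1/(n+1)`.
-/

open Real Set Topology

open Filter Finset

section FoldContinuity

variable {α β ι : Type*} [TopologicalSpace α] [LinearOrder β] [TopologicalSpace β]
  [OrderClosedTopology β]

theorem continuous_finset_fold_max (s : Finset ι) {b : α → β} {f : ι → α → β}
    (hb : Continuous b) (hf : ∀ i, Continuous (f i)) :
    Continuous fun a => s.fold max (b a) (f · a) := by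
  classical
  induction s using Finset.induction_on with
  | empty => simpa using hb
  | insert i s hi ih => simpa only [fold_insert hi] using (hf i).max ih

theorem continuous_finset_fold_min (s : Finset ι) {b : α → β} {f : ι → α → β}
    (hb : Continuous b) (hf : ∀ i, Continuous (f i)) :
    Continuous fun a => s.fold min (b a) (f · a) := by
  classical
  induction s using Finset.induction_on with
  | empty => simpa using hb
  | insert i s hi ih => simpa only [fold_insert hi] using (hf i).min ih

end FoldContinuity

section Trim

variable {X : Type*} [Fintype X]

noncomputable def posSupport (w : X → ℝ) : Finset X := univ.filter (0 < w ·)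

theorem mem_posSupport {w : X → ℝ} {x : X} : x ∈ posSupport w ↔ 0 < w x := by
  simp [posSupport]

/-- The exponentiated coefficients `w x = exp λ_x` of a measure in `I_f(X)` with apex `x0`:
with `n = #(posSupport w)` points in the support, `λ_x ≤ -ln (n + 1)` reads
`w x ≤ 1 / (n + 1)`. -/
structure IsIfWeight (x0 : X) (w : X → ℝ) : Prop where
  nonneg : ∀ x, 0 ≤ w x
  apex : w x0 = 1
  le : ∀ x, x ≠ x0 → w x ≤ 1 / (#(posSupport w) + 1)

theorem IsIfWeight.apex_mem_posSupport {x0 : X} {w : X → ℝ} (hw : IsIfWeight x0 w) :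
    x0 ∈ posSupport w :=
  mem_posSupport.2 (hw.apex ▸ one_pos)

theorem IsIfWeight.lt_apex {x0 x : X} {w : X → ℝ} (hw : IsIfWeight x0 w) (hx : x ≠ x0) :
    w x < w x0 := by
  have hcard : 0 < #(posSupport w) := card_pos.2 ⟨x0, hw.apex_mem_posSupport⟩
  calc w x ≤ 1 / (#(posSupport w) + 1) := hw.le x hx
    _ < 1 := by rw [div_lt_one (by positivity)]; exact_mod_cast Nat.lt_add_of_pos_left hcard
    _ = w x0 := hw.apex.symm

variable [DecidableEq X]

noncomputable def sideMax (u : X → ℝ) (x0 : X) : ℝ := (univ.erase x0).fold max 0 u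

/-- If lowering the weights off `x0` by `s = trimLevel u x0` leaves exactly the points of `A`,
then `s < min_A u`, so the term of `A` forces `sideMax u x0 - s ≤ 1 / (#A + 2)`: the bound of
`I_f` for the survivors. For weights that already satisfy it, every term is `≤ 0`. -/
noncomputable def trimLevel (u : X → ℝ) (x0 : X) : ℝ :=
  (univ.erase x0).powerset.fold max 0 fun A => A.fold min (sideMax u x0 - 1 / (#A + 2)) u

noncomputable def trim (u : X → ℝ) (x0 : X) (x : X) : ℝ :=
  if x = x0 then 1 else max 0 (u x - trimLevel u x0)

theorem trim_self (u : X → ℝ) (x0 : X) : trim u x0 x0 = 1 := if_pos rfl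

theorem trim_of_ne (u : X → ℝ) {x0 x : X} (hx : x ≠ x0) :
    trim u x0 x = max 0 (u x - trimLevel u x0) := if_neg hx

theorem trim_nonneg (u : X → ℝ) (x0 x : X) : 0 ≤ trim u x0 x := by
  unfold trim
  split_ifs
  exacts [zero_le_one, le_max_left _ _]

theorem trimLevel_lt_of_trim_pos (u : X → ℝ) {x0 x : X} (hx : x ≠ x0)
    (hpos : 0 < trim u x0 x) : trimLevel u x0 < u x := by
  rwa [trim_of_ne u hx, lt_max_iff, lt_self_iff_false, false_or, sub_pos] at hpos

theorem trim_le (u : X → ℝ) {x0 x : X} (hx : x ≠ x0) :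
    trim u x0 x ≤ 1 / (#(posSupport (trim u x0)) + 1) := by
  set s := trimLevel u x0
  set T := (posSupport (trim u x0)).erase x0
  rcases (trim_nonneg u x0 x).eq_or_lt with hzero | hpos
  · rw [← hzero]; positivity
  have hlevel : ∀ y ∈ T, s < u y := fun y hy =>
    trimLevel_lt_of_trim_pos u (ne_of_mem_erase hy) (mem_posSupport.1 (mem_of_mem_erase hy))
  have hT : T ∈ (univ.erase x0).powerset :=
    mem_powerset.2 (erase_subset_erase x0 (subset_univ _))
  have hside : sideMax u x0 - 1 / (#T + 2) ≤ s := by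
    have hterm : T.fold min (sideMax u x0 - 1 / (#T + 2)) u ≤ s :=
      (le_fold_max _).2 (Or.inr ⟨T, hT, le_rfl⟩)
    refine ((fold_min_le _).1 hterm).resolve_right ?_
    rintro ⟨y, hy, hle⟩
    exact hle.not_gt (hlevel y hy)
  have hcard : (#T : ℝ) + 2 = #(posSupport (trim u x0)) + 1 := by
    rw [← card_erase_add_one (mem_posSupport.2 ((trim_self u x0).symm ▸ one_pos))]
    push_cast; ring
  have hux : u x ≤ sideMax u x0 :=
    (le_fold_max _).2 (Or.inr ⟨x, mem_erase.2 ⟨hx, mem_univ x⟩, le_rfl⟩)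
  have htrim : trim u x0 x = u x - s := by
    rw [trim_of_ne u hx, max_eq_right (sub_nonneg.2 (trimLevel_lt_of_trim_pos u hx hpos).le)]
  rw [htrim, ← hcard]
  linarith

theorem isIfWeight_trim (u : X → ℝ) (x0 : X) : IsIfWeight x0 (trim u x0) :=
  ⟨trim_nonneg u x0, trim_self u x0, fun _ hx => trim_le u hx⟩

theorem trim_eq_self {x0 : X} {w : X → ℝ} (hw : IsIfWeight x0 w) : trim w x0 = w := by
  set p := #(posSupport w)
  have hside : sideMax w x0 ≤ 1 / (p + 1) :=
    (fold_max_le _).2 ⟨by positivity, fun x hx => hw.le x (ne_of_mem_erase hx)⟩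
  have hterm : ∀ A ∈ (univ.erase x0).powerset,
      A.fold min (sideMax w x0 - 1 / (#A + 2)) w ≤ 0 := by
    intro A hA
    rw [fold_min_le]
    by_cases hzero : ∃ y ∈ A, w y ≤ 0
    · exact Or.inr hzero
    push Not at hzero
    have hx0A : x0 ∉ A := fun h => (ne_of_mem_erase (mem_powerset.1 hA h)) rfl
    have hsub : insert x0 A ⊆ posSupport w := by
      exact insert_subset hw.apex_mem_posSupport fun y hy => mem_posSupport.2 (hzero y hy)
    have hcard : (#A : ℝ) + 1 ≤ p := by
      exact_mod_cast (card_insert_of_notMem hx0A).symm.trans_le (card_le_card hsub)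
    have : 1 / ((p : ℝ) + 1) ≤ 1 / (#A + 2) :=
      one_div_le_one_div_of_le (by positivity) (by linarith)
    exact Or.inl (by linarith)
  have hlevel : trimLevel w x0 = 0 :=
    le_antisymm ((fold_max_le _).2 ⟨le_rfl, hterm⟩) ((le_fold_max _).2 (Or.inl le_rfl))
  funext x
  by_cases hx : x = x0
  · rw [hx, trim_self, hw.apex]
  · rw [trim_of_ne w hx, hlevel, sub_zero, max_eq_right (hw.nonneg x)]

theorem continuous_sideMax (x0 : X) : Continuous fun u : X → ℝ => sideMax u x0 :=
  continuous_finset_fold_max _ continuous_const continuous_apply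

theorem continuous_trimLevel (x0 : X) : Continuous fun u : X → ℝ => trimLevel u x0 :=
  continuous_finset_fold_max _ continuous_const fun _ =>
    continuous_finset_fold_min _ ((continuous_sideMax x0).sub continuous_const) continuous_apply

theorem continuous_trim (x0 : X) : Continuous fun u : X → ℝ => trim u x0 := by
  refine continuous_pi fun x => ?_
  by_cases hx : x = x0
  · simp only [hx, trim_self]; exact continuous_const
  · simp only [trim_of_ne _ hx]
    exact continuous_const.max ((continuous_apply x).sub (continuous_trimLevel x0))

end Trim

section Weight

variable {X : Type*} [TopologicalSpace X] [DiscreteTopology X] [DecidableEq X]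

def spike (x : X) (K : ℝ) : C(X, ℝ) :=
  ⟨fun y => if y = x then 0 else -K, continuous_of_discreteTopology⟩

theorem spike_apply (x : X) (K : ℝ) (y : X) : spike x K y = if y = x then 0 else -K := rfl

theorem spike_eq_sup (x : X) {K K' : ℝ} (hK : 0 ≤ K) (hKK' : K ≤ K') :
    spike x K = spike x K' ⊔ ContinuousMap.const X (-K) := by
  ext y
  by_cases hy : y = x <;> simp [spike_apply, hy, hK, hKK']

/-- `weight μ x = exp λ_x`, where `λ_x ∈ [-∞, 0]` is the coefficient of `δ_x` in `μ`:
`μ (spike x K) = max λ_x (-K)` decreases to `λ_x`. -/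
noncomputable def weight (μ : C(X, ℝ) → ℝ) (x : X) : ℝ := ⨅ K : ℕ, exp (μ (spike x K))

theorem bddBelow_range_exp_apply_spike (μ : C(X, ℝ) → ℝ) (x : X) :
    BddBelow (range fun K : ℕ => exp (μ (spike x K))) :=
  ⟨0, by rintro _ ⟨K, rfl⟩; positivity⟩

theorem weight_nonneg (μ : C(X, ℝ) → ℝ) (x : X) : 0 ≤ weight μ x :=
  le_ciInf fun _ => (exp_pos _).le

theorem weight_le_exp_apply_spike (μ : C(X, ℝ) → ℝ) (x : X) (K : ℕ) :
    weight μ x ≤ exp (μ (spike x K)) :=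
  ciInf_le (bddBelow_range_exp_apply_spike μ x) K

theorem tendsto_exp_neg_natCast : Tendsto (fun K : ℕ => exp (-K)) atTop (𝓝 0) :=
  tendsto_exp_neg_atTop_nhds_zero.comp tendsto_natCast_atTop_atTop

theorem weight_le_of_forall_exp_apply_spike_le {μ : C(X, ℝ) → ℝ} {x : X} {a : ℝ} (ha : 0 ≤ a)
    (h : ∀ K : ℕ, exp (μ (spike x K)) ≤ max a (exp (-K))) : weight μ x ≤ a := by
  have hlim : Tendsto (fun K : ℕ => max a (exp (-K))) atTop (𝓝 a) := by
    simpa only [max_eq_left ha] using (tendsto_const_nhds (x := a)).max tendsto_exp_neg_natCast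
  exact ge_of_tendsto' hlim fun K => (weight_le_exp_apply_spike μ x K).trans (h K)

variable {μ : C(X, ℝ) → ℝ}

theorem IsIPM.exp_apply_spike_eq_max (h : IsIPM μ) (x : X) {K K' : ℕ} (hKK' : K ≤ K') :
    exp (μ (spike x K)) = max (exp (μ (spike x K'))) (exp (-K)) := by
  rw [spike_eq_sup x K.cast_nonneg (Nat.cast_le.2 hKK'), h.2.2, h.1, exp_monotone.map_max]

theorem IsIPM.exp_apply_spike (h : IsIPM μ) (x : X) (K : ℕ) :
    exp (μ (spike x K)) = max (weight μ x) (exp (-K)) := by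
  have hanti : Antitone fun K : ℕ => exp (μ (spike x K)) := fun K K' hKK' => by
    simp only [h.exp_apply_spike_eq_max x hKK', le_max_left]
  refine tendsto_nhds_unique ?_
    ((tendsto_atTop_ciInf hanti (bddBelow_range_exp_apply_spike μ x)).max tendsto_const_nhds)
  exact tendsto_const_nhds.congr' ((eventually_ge_atTop K).mono
    fun K' hK' => h.exp_apply_spike_eq_max x hK')

theorem continuous_weight (x : X) :
    Continuous fun μ : {μ : C(X, ℝ) → ℝ // IsIPM μ} => weight μ.1 x := by
  have hF : ∀ K : ℕ, Continuous fun μ : {μ : C(X, ℝ) → ℝ // IsIPM μ} => exp (μ.1 (spike x K)) :=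
    fun K => continuous_exp.comp ((continuous_apply _).comp continuous_subtype_val)
  refine TendstoUniformly.continuous ?_ (Eventually.of_forall (f := atTop) hF).frequently
  rw [Metric.tendstoUniformly_iff]
  intro ε hε
  filter_upwards [tendsto_exp_neg_natCast.eventually (gt_mem_nhds hε)] with K hK μ
  rw [μ.2.exp_apply_spike, Real.dist_eq, abs_sub_lt_iff]
  have := max_le_add_of_nonneg (weight_nonneg μ.1 x) (exp_pos (-K : ℝ)).le
  constructor <;> linarith [le_max_left (weight μ.1 x) (exp (-K))]

end Weight

section MaxPlus

variable {X : Type*} [TopologicalSpace X] [DiscreteTopology X] [DecidableEq X] {n : ℕ}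
  {lam : Fin n → ℝ} {xs : Fin n → X}

theorem weight_maxPlus_apply (hinj : Function.Injective xs) (hlam : ∀ i, lam i ≤ 0) (j : Fin n) :
    weight (maxPlus lam xs) (xs j) = exp (lam j) := by
  refine le_antisymm (weight_le_of_forall_exp_apply_spike_le (exp_pos _).le fun K => ?_)
    (le_ciInf fun K => ?_)
  · rw [← exp_monotone.map_max, exp_le_exp]
    have : Nonempty (Fin n) := ⟨j⟩
    refine ciSup_le fun i => ?_
    by_cases hij : i = j
    · simp [hij, spike_apply]
    · rw [spike_apply, if_neg (hinj.ne hij)]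
      exact le_max_of_le_right (by linarith [hlam i])
  · refine exp_le_exp.2 (le_of_eq_of_le ?_ (le_ciSup (finite_range _).bddAbove j))
    simp [spike_apply]

theorem weight_maxPlus_of_notMem (hn : 0 < n) (hlam : ∀ i, lam i ≤ 0) {y : X}
    (hy : y ∉ range xs) : weight (maxPlus lam xs) y = 0 := by
  refine le_antisymm (weight_le_of_forall_exp_apply_spike_le le_rfl fun K => ?_) (weight_nonneg _ _)
  have : Nonempty (Fin n) := ⟨⟨0, hn⟩⟩
  refine (exp_le_exp.2 (ciSup_le fun i => ?_)).trans (le_max_right _ _)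
  rw [spike_apply, if_neg fun h => hy ⟨i, h⟩]
  linarith [hlam i]

end MaxPlus

section OfWeights

variable {X : Type*} [TopologicalSpace X] [Fintype X]

/-- The idempotent measure `⊕ₓ log (w x) ⊙ δₓ` written multiplicatively; points with `w x = 0`
carry the coefficient `-∞`. -/
noncomputable def ofWeights (w : X → ℝ) : C(X, ℝ) → ℝ :=
  fun φ => log (univ.fold max 0 fun x => w x * exp (φ x))

theorem ofWeights_eq_maxPlus {w : X → ℝ} {n : ℕ} (hn : 0 < n) {xs : Fin n → X}
    (hpos : ∀ i, 0 < w (xs i)) (hzero : ∀ x ∉ range xs, w x = 0) :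
    ofWeights w = maxPlus (fun i => log (w (xs i))) xs := by
  funext φ
  have : Nonempty (Fin n) := ⟨⟨0, hn⟩⟩
  set R := ⨆ i, (log (w (xs i)) + φ (xs i))
  have hterm : ∀ i, w (xs i) * exp (φ (xs i)) = exp (log (w (xs i)) + φ (xs i)) := fun i => by
    rw [exp_add, exp_log (hpos i)]
  suffices (univ.fold max 0 fun x => w x * exp (φ x)) = exp R from
    (congrArg log this).trans (log_exp R)
  refine le_antisymm ((fold_max_le _).2 ⟨(exp_pos R).le, fun x _ => ?_⟩) ?_
  · by_cases hx : x ∈ range xs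
    · obtain ⟨i, rfl⟩ := hx
      rw [hterm, exp_le_exp]
      exact le_ciSup (f := fun i => log (w (xs i)) + φ (xs i)) (finite_range _).bddAbove i
    · rw [hzero x hx, zero_mul]
      exact (exp_pos R).le
  · obtain ⟨i, hi⟩ : ∃ i, log (w (xs i)) + φ (xs i) = R := exists_eq_ciSup_of_finite
    rw [← hi, ← hterm]
    exact (le_fold_max _).2 (Or.inr ⟨xs i, mem_univ _, le_rfl⟩)

theorem continuous_ofWeights {α : Type*} [TopologicalSpace α] {f : α → X → ℝ}
    (hf : Continuous f) (hpos : ∀ a, ∃ x, 0 < f a x) : Continuous fun a => ofWeights (f a) := by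
  refine continuous_pi fun φ => Continuous.log
    (continuous_finset_fold_max _ continuous_const fun x =>
      ((continuous_apply x).comp hf).mul continuous_const) fun a => ?_
  obtain ⟨x, hx⟩ := hpos a
  exact ((mul_pos hx (exp_pos _)).trans_le
    ((le_fold_max _).2 (Or.inr ⟨x, mem_univ x, le_rfl⟩))).ne'

theorem isIf_ofWeights {x0 : X} {w : X → ℝ} (hw : IsIfWeight x0 w) : IsIf (ofWeights w) := by
  set S := posSupport w
  have hx0 : x0 ∈ S := hw.apex_mem_posSupport
  have hS : 0 < #S := card_pos.2 ⟨x0, hx0⟩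
  set xs : Fin #S → X := fun i => S.equivFin.symm i
  have hxs : ∀ x (hx : x ∈ S), xs (S.equivFin ⟨x, hx⟩) = x := by simp [xs]
  have hpos : ∀ i, 0 < w (xs i) := fun i => mem_posSupport.1 (S.equivFin.symm i).2
  set i0 := S.equivFin ⟨x0, hx0⟩
  refine ⟨#S, hS, xs, fun i => log (w (xs i)), i0,
    Subtype.val_injective.comp S.equivFin.symm.injective, by simp [i0, hxs, hw.apex],
    fun i hi => ?_, ofWeights_eq_maxPlus hS hpos fun x hx => ?_⟩
  · have hne : xs i ≠ x0 := fun h => hi (S.equivFin.symm_apply_eq.1 (Subtype.ext h))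
    calc log (w (xs i)) ≤ log (1 / (#S + 1)) := log_le_log (hpos i) (hw.le _ hne)
      _ = -log (#S + 1) := by rw [one_div, log_inv]
  · by_contra hne
    exact hx ⟨_, hxs x (mem_posSupport.2 ((hw.nonneg x).lt_of_ne' hne))⟩

end OfWeights

section Retraction

variable {X : Type*} [TopologicalSpace X] [DiscreteTopology X] [DecidableEq X]

theorem IsIf.exists_isIfWeight [Fintype X] {μ : C(X, ℝ) → ℝ} (h : IsIf μ) :
    ∃ x0, IsIfWeight x0 (weight μ) ∧ ofWeights (weight μ) = μ := by
  obtain ⟨n, hn, xs, lam, i0, hinj, h0, hbd, rfl⟩ := h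
  have hlam : ∀ i, lam i ≤ 0 := fun i => by
    by_cases hi : i = i0
    · exact hi ▸ h0.le
    · exact (hbd i hi).trans (neg_nonpos.2 (log_nonneg (by linarith [n.cast_nonneg (α := ℝ)])))
  have happly := weight_maxPlus_apply hinj hlam
  have hzero : ∀ x ∉ range xs, weight (maxPlus lam xs) x = 0 :=
    fun _ => weight_maxPlus_of_notMem hn hlam
  have hcard : #(posSupport (weight (maxPlus lam xs))) ≤ n := by
    refine (card_le_card (t := univ.image xs) fun x hx => ?_).trans
      (card_image_le.trans (card_fin n).le)
    by_contra hxs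
    exact (mem_posSupport.1 hx).ne' (hzero x fun ⟨i, hi⟩ => hxs (mem_image.2 ⟨i, mem_univ i, hi⟩))
  refine ⟨xs i0, ⟨weight_nonneg _, by rw [happly, h0, exp_zero], fun x hx => ?_⟩, ?_⟩
  · by_cases hxr : x ∈ range xs
    · obtain ⟨j, rfl⟩ := hxr
      calc weight (maxPlus lam xs) (xs j) ≤ exp (-log (n + 1)) :=
            (happly j).trans_le (exp_le_exp.2 (hbd j (ne_of_apply_ne xs hx)))
        _ = 1 / (n + 1) := by rw [exp_neg, exp_log (by positivity), one_div]
        _ ≤ 1 / (#(posSupport (weight (maxPlus lam xs))) + 1) :=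
            one_div_le_one_div_of_le (by positivity) (by exact_mod_cast Nat.succ_le_succ hcard)
    · rw [hzero x hxr]; positivity
  · rw [ofWeights_eq_maxPlus hn (fun i => (happly i).symm ▸ exp_pos _) hzero]
    simp_rw [happly, log_exp]

def apexNbhd (x0 : X) : Set {μ : C(X, ℝ) → ℝ // IsIPM μ} :=
  {μ | ∀ x, x ≠ x0 → weight μ.1 x < weight μ.1 x0}

theorem isOpen_apexNbhd [Finite X] (x0 : X) : IsOpen (apexNbhd x0) := by
  simp only [apexNbhd, Set.ofPred_forall]
  exact isOpen_iInter_of_finite fun x => isOpen_iInter_of_finite fun _ =>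
    isOpen_lt (continuous_weight x) (continuous_weight x0)

theorem IsIfWeight.mem_apexNbhd [Fintype X] {x0 : X} {μ : {μ : C(X, ℝ) → ℝ // IsIPM μ}}
    (hw : IsIfWeight x0 (weight μ.1)) : μ ∈ apexNbhd x0 :=
  fun _ hx => hw.lt_apex hx

theorem eq_of_mem_apexNbhd {x0 x1 : X} {μ : {μ : C(X, ℝ) → ℝ // IsIPM μ}}
    (h0 : μ ∈ apexNbhd x0) (h1 : μ ∈ apexNbhd x1) : x0 = x1 :=
  by_contra fun hne => (h0 x1 (Ne.symm hne)).asymm (h1 x0 hne)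

theorem Continuous.ofWeights_trim_weight [Fintype X] {α : Type*} [TopologicalSpace α]
    {f : α → X} {g : α → {μ : C(X, ℝ) → ℝ // IsIPM μ}} (hf : Continuous f) (hg : Continuous g) :
    Continuous fun a => ofWeights (trim (weight (g a).1) (f a)) := by
  have hpiece : Continuous fun p : X × {μ : C(X, ℝ) → ℝ // IsIPM μ} =>
      ofWeights (trim (weight p.2.1) p.1) :=
    continuous_prod_of_discrete_left.2 fun x0 =>
      continuous_ofWeights ((continuous_trim x0).comp (continuous_pi continuous_weight))
        fun _ => ⟨x0, by rw [trim_self]; exact one_pos⟩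
  exact (hpiece.comp (hf.prodMk hg) :)

end Retraction

theorem stmt11_general {X : Type*} [TopologicalSpace X] [T2Space X] [Finite X] :
    ∃ U : Set {μ : C(X, ℝ) → ℝ // IsIPM μ}, IsOpen U ∧
      (∀ μ : {μ : C(X, ℝ) → ℝ // IsIPM μ}, IsIf μ.1 → μ ∈ U) ∧
      ∃ ρ : U → C(X, ℝ) → ℝ, Continuous ρ ∧
        (∀ μ : U, IsIf (ρ μ)) ∧
        (∀ μ : U, IsIf (μ : {μ : C(X, ℝ) → ℝ // IsIPM μ}).1 →
          ρ μ = (μ : {μ : C(X, ℝ) → ℝ // IsIPM μ}).1) := by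
  classical
  have := Fintype.ofFinite X
  choose apex hapex using fun μ : ↥(⋃ x0, apexNbhd (X := X) x0) => mem_iUnion.1 μ.2
  have hapex_eq : ∀ μ x0, μ.1 ∈ apexNbhd x0 → apex μ = x0 :=
    fun μ _ h => eq_of_mem_apexNbhd (hapex μ) h
  have hcont : Continuous apex := continuous_discrete_rng.2 fun x0 => by
    have : apex ⁻¹' {x0} = Subtype.val ⁻¹' apexNbhd x0 :=
      ext fun μ => ⟨fun h => (h : apex μ = x0) ▸ hapex μ, hapex_eq μ x0⟩
    exact this ▸ (isOpen_apexNbhd x0).preimage continuous_subtype_val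
  refine ⟨_, isOpen_iUnion isOpen_apexNbhd, fun μ hμ => ?_,
    fun μ => ofWeights (trim (weight μ.1.1) (apex μ)),
    hcont.ofWeights_trim_weight continuous_subtype_val,
    fun μ => isIf_ofWeights (isIfWeight_trim _ _), fun μ hμ => ?_⟩
  · obtain ⟨x0, hw, -⟩ := hμ.exists_isIfWeight
    exact mem_iUnion.2 ⟨x0, hw.mem_apexNbhd⟩
  · obtain ⟨x0, hw, hμw⟩ := hμ.exists_isIfWeight
    dsimp only
    rw [hapex_eq μ x0 hw.mem_apexNbhd, trim_eq_self hw, hμw]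

/-- for a finite compact Hausdorff space `X`, `I_f(X)` is a neighborhood
retract of `I(X)`: there exist an open `U ⊆ I(X)` containing `I_f(X)` and a continuous
`ρ : U → I_f(X)` fixing every point of `I_f(X)`. -/
theorem stmt11 {X : Type*} [TopologicalSpace X] [CompactSpace X] [T2Space X] [Finite X] :
    ∃ U : Set {μ : C(X, ℝ) → ℝ // IsIPM μ}, IsOpen U ∧
      (∀ μ : {μ : C(X, ℝ) → ℝ // IsIPM μ}, IsIf μ.1 → μ ∈ U) ∧
      ∃ ρ : U → C(X, ℝ) → ℝ, Continuous ρ ∧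
        (∀ μ : U, IsIf (ρ μ)) ∧
        (∀ μ : U, IsIf (μ : {μ : C(X, ℝ) → ℝ // IsIPM μ}).1 →
          ρ μ = (μ : {μ : C(X, ℝ) → ℝ // IsIPM μ}).1) :=
  stmt11_general
end
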